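/- Under the stated setup and algorithmic hypotheses, for every k ≥ 0: f(A^{k+1}, Z^{k+1}, H^{k+1}) ≤ f(A^k, Z^k, H^k) − (λ/2)‖A^{k+1} − A^k‖² − (λ/2)‖Z^{k+1} − Z^k‖². In particular, the sequence f(A^k, Z^k, H^k) is monotonically decreasing. -/

import Mathlib

open Matrix BigOperators Filter Topology

/-- Frobenius norm of a real matrix. -/
noncomputable def frob {m n : ℕ} (W : Matrix (Fin m) (Fin n) ℝ) : ℝ :=
  Real.sqrt (∑ i, ∑ j, (W i j) ^ 2)

/-- Laplacian `L_S = D_S - (|S| + |S|ᵀ)/2` of a square real matrix `S`. -/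
noncomputable def lap {n : ℕ} (S : Matrix (Fin n) (Fin n) ℝ) : Matrix (Fin n) (Fin n) ℝ :=
  Matrix.diagonal (fun i => ∑ j, (|S i j| + |S j i|) / 2)
    - (1 / 2 : ℝ) • (S.map (fun x => |x|) + (S.map (fun x => |x|))ᵀ)

/-- The objective `f(A, Z, H)` of the penalized DGSL model. -/
noncomputable def fObj {n k d : ℕ} (X : Matrix (Fin d) (Fin n) ℝ)
    (W M C : Matrix (Fin n) (Fin n) ℝ) (lam lamZ lamM a1 a2 : ℝ)
    (A Z : Matrix (Fin n) (Fin n) ℝ) (H : Matrix (Fin k) (Fin n) ℝ) : ℝ :=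
  (1 / 2) * frob (X - X * A) ^ 2 + (lam / 2) * frob (A - Z) ^ 2
    + lamZ * (∑ i, ∑ j, |Z i j|)
    + a1 * trace (H * lap Z * Hᵀ) / trace (H * lap C * Hᵀ)
    + a2 * trace (H * (lap W + lamM • lap M) * Hᵀ) / trace (H * lap C * Hᵀ)

/-!
Each block update minimizes a function that is `λ`-strongly convex in the updated block for the
Frobenius norm: in `A`, the convex data term plus the coupling `(λ/2)‖A - Z‖²`; in `Z`, the same
coupling plus a nonnegatively weighted `ℓ₁` norm of `Z`, because
`Tr(H L_Z Hᵀ) = ∑ᵢⱼ |zᵢⱼ| ‖hᵢ - hⱼ‖² / 2` (with `hᵢ` the columns of `H`). A minimizer `x` of an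
`m`-strongly convex `f` over a convex set satisfies `f x + (m/2)‖x - y‖² ≤ f y` on that set, and the
`H`-update does not increase `f`; chaining the three updates gives the decrease.
-/

open Set

attribute [local instance] Matrix.frobeniusNormedAddCommGroup Matrix.frobeniusNormedSpace

section StrongConvexity

variable {E : Type*} [NormedAddCommGroup E] [NormedSpace ℝ E] {s t : Set E} {m : ℝ}
  {f g : E → ℝ}

lemma StrongConvexOn.subset (hf : StrongConvexOn t m f) (hst : s ⊆ t) (hs : Convex ℝ s) :
    StrongConvexOn s m f :=
  ⟨hs, fun _ hx _ hy => hf.2 (hst hx) (hst hy)⟩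

lemma ConvexOn.add_strongConvexOn (hf : ConvexOn ℝ s f) (hg : StrongConvexOn s m g) :
    StrongConvexOn s m (f + g) := by
  have h := (uniformConvexOn_zero.2 hf).add hg
  rwa [zero_add] at h

lemma StrongConvexOn.add_sq_norm_sub_le_of_isMinOn (hf : StrongConvexOn s m f) {x y : E}
    (hx : x ∈ s) (hy : y ∈ s) (hmin : IsMinOn f s x) : f x + m / 2 * ‖x - y‖ ^ 2 ≤ f y := by
  have hbound : ∀ a ∈ Ioo (0 : ℝ) 1, f x + a * (m / 2 * ‖x - y‖ ^ 2) ≤ f y := by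
    rintro a ⟨ha0, ha1⟩
    have hb : 0 ≤ 1 - a := sub_nonneg.2 ha1.le
    have hcombo := hf.2 hx hy ha0.le hb (add_sub_cancel a 1)
    have hmin' := isMinOn_iff.1 hmin _ (hf.1 hx hy ha0.le hb (add_sub_cancel a 1))
    simp only [smul_eq_mul] at hcombo
    refine le_of_mul_le_mul_left ?_ (sub_pos.2 ha1)
    linarith
  refine le_of_tendsto (f := fun a => f x + a * (m / 2 * ‖x - y‖ ^ 2)) (x := 𝓝[<] 1) ?_ ?_
  · exact ((continuous_const.add (continuous_id.mul continuous_const)).tendsto' 1 _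
      (by simp)).mono_left nhdsWithin_le_nhds
  · filter_upwards [Ioo_mem_nhdsLT (zero_lt_one' ℝ)] with a ha using hbound a ha

end StrongConvexity

lemma Matrix.convex_setOf_forall_diag_eq_zero {n : Type*} :
    Convex ℝ {Z : Matrix n n ℝ | ∀ i, Z i i = 0} := fun Z hZ Z' hZ' a b _ _ _ i => by
  simp [hZ i, hZ' i]

namespace Matrix

variable {l m n : Type*} [Fintype l] [Fintype m] [Fintype n]

lemma frobenius_norm_sq_eq_sum (A : Matrix m n ℝ) : ‖A‖ ^ 2 = ∑ i, ∑ j, A i j ^ 2 := by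
  rw [frobenius_norm_def, ← Real.sqrt_eq_rpow, Real.sq_sqrt (by positivity)]
  simp only [Real.rpow_two, Real.norm_eq_abs, sq_abs]

lemma frobenius_norm_smul_add_smul_sq {a b : ℝ} (hab : a + b = 1) (U V : Matrix m n ℝ) :
    ‖a • U + b • V‖ ^ 2 = a * ‖U‖ ^ 2 + b * ‖V‖ ^ 2 - a * b * ‖U - V‖ ^ 2 := by
  obtain rfl : b = 1 - a := by linarith
  simp only [frobenius_norm_sq_eq_sum, Finset.mul_sum, ← Finset.sum_sub_distrib,
    ← Finset.sum_add_distrib, add_apply, smul_apply, sub_apply, smul_eq_mul]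
  exact Finset.sum_congr rfl fun i _ => Finset.sum_congr rfl fun j _ => by ring

lemma strongConvexOn_frobenius_sq_norm_sub (μ : ℝ) (C : Matrix m n ℝ) :
    StrongConvexOn univ μ fun A => μ / 2 * ‖A - C‖ ^ 2 := by
  refine ⟨convex_univ, fun A _ B _ a b _ _ hab => le_of_eq ?_⟩
  have hshift : a • A + b • B - C = a • (A - C) + b • (B - C) := by
    rw [smul_sub, smul_sub, sub_add_sub_comm, ← add_smul, hab, one_smul]
  dsimp only
  rw [hshift, frobenius_norm_smul_add_smul_sq hab, sub_sub_sub_cancel_right, smul_eq_mul,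
    smul_eq_mul]
  ring

lemma convexOn_frobenius_sq_norm_sub_mul (B : Matrix l n ℝ) (X : Matrix l m ℝ) :
    ConvexOn ℝ univ fun A : Matrix m n ℝ => ‖B - X * A‖ ^ 2 := by
  refine ⟨convex_univ, fun A _ A' _ a b ha hb hab => ?_⟩
  have hshift : B - X * (a • A + b • A') = a • (B - X * A) + b • (B - X * A') := by
    rw [Matrix.mul_add, Matrix.mul_smul, Matrix.mul_smul, smul_sub, smul_sub, sub_add_sub_comm,
      ← add_smul, hab, one_smul]
  dsimp only
  rw [hshift, frobenius_norm_smul_add_smul_sq hab, smul_eq_mul, smul_eq_mul]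
  have := mul_nonneg (mul_nonneg ha hb) (sq_nonneg ‖B - X * A - (B - X * A')‖)
  linarith

lemma convexOn_sum_mul_abs (w : m → n → ℝ) (hw : ∀ i j, 0 ≤ w i j) :
    ConvexOn ℝ univ fun Z : Matrix m n ℝ => ∑ i, ∑ j, w i j * |Z i j| := by
  refine ⟨convex_univ, fun Z _ Z' _ a b ha hb _ => ?_⟩
  simp only [smul_eq_mul, Finset.mul_sum, ← Finset.sum_add_distrib]
  refine Finset.sum_le_sum fun i _ => Finset.sum_le_sum fun j _ => ?_
  have habs : |(a • Z + b • Z') i j| ≤ a * |Z i j| + b * |Z' i j| := by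
    simpa [abs_mul, abs_of_nonneg ha, abs_of_nonneg hb] using abs_add_le (a * Z i j) (b * Z' i j)
  calc w i j * |(a • Z + b • Z') i j| ≤ w i j * (a * |Z i j| + b * |Z' i j|) :=
        mul_le_mul_of_nonneg_left habs (hw i j)
    _ = a * (w i j * |Z i j|) + b * (w i j * |Z' i j|) := by ring

lemma trace_mul_mul_transpose (H : Matrix l m ℝ) (L : Matrix m m ℝ) :
    trace (H * L * Hᵀ) = ∑ p, H p ⬝ᵥ (L *ᵥ H p) := by
  simp only [trace, diag, mul_apply, transpose_apply, dotProduct, mulVec, Finset.mul_sum,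
    Finset.sum_mul]
  refine Finset.sum_congr rfl fun p _ => ?_
  rw [Finset.sum_comm]
  exact Finset.sum_congr rfl fun i _ => Finset.sum_congr rfl fun j _ => by ring

lemma dotProduct_lap_mulVec {n : ℕ} (S : Matrix (Fin n) (Fin n) ℝ) (x : Fin n → ℝ) :
    x ⬝ᵥ (lap S *ᵥ x) = ∑ i, ∑ j, |S i j| * (x i - x j) ^ 2 / 2 := by
  have hexpand : x ⬝ᵥ (lap S *ᵥ x) = ∑ i, ∑ j, |S i j| * (x i ^ 2 - x i * x j) / 2
      + ∑ i, ∑ j, |S j i| * (x i ^ 2 - x i * x j) / 2 := by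
    rw [lap, sub_mulVec, dotProduct_sub]
    simp only [dotProduct, mulVec, diagonal_apply, ite_mul, zero_mul, Finset.sum_ite_eq,
      Finset.mem_univ, if_true, Matrix.smul_apply, Matrix.add_apply, map_apply, transpose_apply,
      smul_eq_mul, Finset.mul_sum, Finset.sum_mul, ← Finset.sum_sub_distrib,
      ← Finset.sum_add_distrib]
    refine Finset.sum_congr rfl fun i _ => Finset.sum_congr rfl fun j _ => ?_
    ring
  have hswap : ∑ i, ∑ j, |S j i| * (x i ^ 2 - x i * x j) / 2
      = ∑ i, ∑ j, |S i j| * (x j ^ 2 - x j * x i) / 2 := Finset.sum_comm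
  rw [hexpand, hswap, ← Finset.sum_add_distrib]
  refine Finset.sum_congr rfl fun i _ => ?_
  rw [← Finset.sum_add_distrib]
  refine Finset.sum_congr rfl fun j _ => ?_
  ring

lemma trace_mul_lap_mul_transpose {n k : ℕ} (H : Matrix (Fin k) (Fin n) ℝ)
    (S : Matrix (Fin n) (Fin n) ℝ) :
    trace (H * lap S * Hᵀ) = ∑ i, ∑ j, |S i j| * ∑ p, (H p i - H p j) ^ 2 / 2 := by
  simp only [trace_mul_mul_transpose, dotProduct_lap_mulVec, Finset.mul_sum, mul_div_assoc]
  rw [Finset.sum_comm]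
  exact Finset.sum_congr rfl fun i _ => Finset.sum_comm

end Matrix

lemma frob_eq_norm {m n : ℕ} (A : Matrix (Fin m) (Fin n) ℝ) : frob A = ‖A‖ := by
  rw [frob, ← frobenius_norm_sq_eq_sum, Real.sqrt_sq (norm_nonneg A)]

section Objective

variable {n k d : ℕ} (X : Matrix (Fin d) (Fin n) ℝ) (W M C : Matrix (Fin n) (Fin n) ℝ)
  (lam lamZ lamM a1 a2 : ℝ)

lemma strongConvexOn_fObj_A (Z : Matrix (Fin n) (Fin n) ℝ) (H : Matrix (Fin k) (Fin n) ℝ) :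
    StrongConvexOn univ lam fun A => fObj X W M C lam lamZ lamM a1 a2 A Z H := by
  have hconv := ((convexOn_frobenius_sq_norm_sub_mul X X).smul one_half_pos.le).add
    (convexOn_const (lamZ * (∑ i, ∑ j, |Z i j|)
      + a1 * trace (H * lap Z * Hᵀ) / trace (H * lap C * Hᵀ)
      + a2 * trace (H * (lap W + lamM • lap M) * Hᵀ) / trace (H * lap C * Hᵀ)) convex_univ)
  convert hconv.add_strongConvexOn (strongConvexOn_frobenius_sq_norm_sub lam Z) using 1
  funext A
  simp only [fObj, frob_eq_norm, Pi.add_apply, smul_eq_mul]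
  ring

lemma strongConvexOn_fObj_Z (hlamZ : 0 ≤ lamZ) (ha1 : 0 ≤ a1) (A : Matrix (Fin n) (Fin n) ℝ)
    (H : Matrix (Fin k) (Fin n) ℝ) (hden : 0 ≤ trace (H * lap C * Hᵀ)) :
    StrongConvexOn univ lam fun Z => fObj X W M C lam lamZ lamM a1 a2 A Z H := by
  set w : Fin n → Fin n → ℝ := fun i j => ∑ p, (H p i - H p j) ^ 2 / 2
  have hweights : ∀ i j, 0 ≤ lamZ + a1 * w i j / trace (H * lap C * Hᵀ) := fun i j => by
    positivity
  have hconv := (convexOn_sum_mul_abs _ hweights).add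
    (convexOn_const (1 / 2 * ‖X - X * A‖ ^ 2
      + a2 * trace (H * (lap W + lamM • lap M) * Hᵀ) / trace (H * lap C * Hᵀ)) convex_univ)
  convert hconv.add_strongConvexOn (strongConvexOn_frobenius_sq_norm_sub lam A) using 1
  funext Z
  have hsum : ∑ i, ∑ j, (lamZ + a1 * w i j / trace (H * lap C * Hᵀ)) * |Z i j|
      = lamZ * ∑ i, ∑ j, |Z i j|
        + a1 * (∑ i, ∑ j, |Z i j| * w i j) / trace (H * lap C * Hᵀ) := by
    simp only [Finset.mul_sum, Finset.sum_div, ← Finset.sum_add_distrib]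
    exact Finset.sum_congr rfl fun i _ => Finset.sum_congr rfl fun j _ => by ring
  simp only [fObj, frob_eq_norm, trace_mul_lap_mul_transpose H Z, Pi.add_apply, hsum,
    norm_sub_rev A Z]
  ring

lemma fObj_sweep_le (hlamZ : 0 ≤ lamZ) (ha1 : 0 ≤ a1)
    {A₀ Z₀ A₁ Z₁ : Matrix (Fin n) (Fin n) ℝ} {H₀ H₁ : Matrix (Fin k) (Fin n) ℝ}
    (hden : 0 ≤ trace (H₁ * lap C * H₁ᵀ)) (hZ₀ : ∀ i, Z₀ i i = 0) (hZ₁ : ∀ i, Z₁ i i = 0)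
    (hH : fObj X W M C lam lamZ lamM a1 a2 A₀ Z₀ H₁ ≤ fObj X W M C lam lamZ lamM a1 a2 A₀ Z₀ H₀)
    (hA : ∀ A, fObj X W M C lam lamZ lamM a1 a2 A₁ Z₀ H₁ ≤ fObj X W M C lam lamZ lamM a1 a2 A Z₀ H₁)
    (hZ : ∀ Z : Matrix (Fin n) (Fin n) ℝ, (∀ i, Z i i = 0) →
      fObj X W M C lam lamZ lamM a1 a2 A₁ Z₁ H₁ ≤ fObj X W M C lam lamZ lamM a1 a2 A₁ Z H₁) :
    fObj X W M C lam lamZ lamM a1 a2 A₁ Z₁ H₁ ≤ fObj X W M C lam lamZ lamM a1 a2 A₀ Z₀ H₀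
      - lam / 2 * frob (A₁ - A₀) ^ 2 - lam / 2 * frob (Z₁ - Z₀) ^ 2 := by
  have hAdec := (strongConvexOn_fObj_A X W M C lam lamZ lamM a1 a2 Z₀ H₁
    ).add_sq_norm_sub_le_of_isMinOn (mem_univ A₁) (mem_univ A₀) (isMinOn_iff.2 fun A _ => hA A)
  have hZdec := ((strongConvexOn_fObj_Z X W M C lam lamZ lamM a1 a2 hlamZ ha1 A₁ H₁ hden).subset
    (subset_univ _) convex_setOf_forall_diag_eq_zero).add_sq_norm_sub_le_of_isMinOn hZ₁ hZ₀
    (isMinOn_iff.2 hZ)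
  rw [frob_eq_norm, frob_eq_norm]
  linarith

end Objective

theorem dgsl_sufficient_decrease_general (n k d : ℕ)
    (X : Matrix (Fin d) (Fin n) ℝ) (W M C : Matrix (Fin n) (Fin n) ℝ)
    (lam lamZ lamM a1 a2 : ℝ) (hlam : 0 < lam) (hlamZ : 0 < lamZ)
    (ha1 : 0 < a1)
    (hC : ∀ H : Matrix (Fin k) (Fin n) ℝ, H * Hᵀ = 1 → 0 < trace (H * lap C * Hᵀ))
    (Aseq Zseq : ℕ → Matrix (Fin n) (Fin n) ℝ)
    (Hseq : ℕ → Matrix (Fin k) (Fin n) ℝ)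
    (hZ0 : ∀ i, Zseq 0 i i = 0) (hH0 : Hseq 0 * (Hseq 0)ᵀ = 1)
    (hHstep : ∀ t : ℕ, Hseq (t + 1) * (Hseq (t + 1))ᵀ = 1 ∧
      ∀ H : Matrix (Fin k) (Fin n) ℝ, H * Hᵀ = 1 →
        fObj X W M C lam lamZ lamM a1 a2 (Aseq t) (Zseq t) (Hseq (t + 1))
          ≤ fObj X W M C lam lamZ lamM a1 a2 (Aseq t) (Zseq t) H)
    (hAstep : ∀ (t : ℕ) (A : Matrix (Fin n) (Fin n) ℝ),
      fObj X W M C lam lamZ lamM a1 a2 (Aseq (t + 1)) (Zseq t) (Hseq (t + 1))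
        ≤ fObj X W M C lam lamZ lamM a1 a2 A (Zseq t) (Hseq (t + 1)))
    (hZstep : ∀ t : ℕ, (∀ i, Zseq (t + 1) i i = 0) ∧
      ∀ Z : Matrix (Fin n) (Fin n) ℝ, (∀ i, Z i i = 0) →
        fObj X W M C lam lamZ lamM a1 a2 (Aseq (t + 1)) (Zseq (t + 1)) (Hseq (t + 1))
          ≤ fObj X W M C lam lamZ lamM a1 a2 (Aseq (t + 1)) Z (Hseq (t + 1))) :
    (∀ t : ℕ,
      fObj X W M C lam lamZ lamM a1 a2 (Aseq (t + 1)) (Zseq (t + 1)) (Hseq (t + 1))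
        ≤ fObj X W M C lam lamZ lamM a1 a2 (Aseq t) (Zseq t) (Hseq t)
          - (lam / 2) * frob (Aseq (t + 1) - Aseq t) ^ 2
          - (lam / 2) * frob (Zseq (t + 1) - Zseq t) ^ 2) ∧
    ∀ t : ℕ,
      fObj X W M C lam lamZ lamM a1 a2 (Aseq (t + 1)) (Zseq (t + 1)) (Hseq (t + 1))
        ≤ fObj X W M C lam lamZ lamM a1 a2 (Aseq t) (Zseq t) (Hseq t) := by
  have hZdiag : ∀ t i, Zseq t i i = 0 := by
    rintro (_ | t)
    exacts [hZ0, (hZstep t).1]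
  have hH : ∀ t, Hseq t * (Hseq t)ᵀ = 1 := by
    rintro (_ | t)
    exacts [hH0, (hHstep t).1]
  have hdescent := fun t => fObj_sweep_le X W M C lam lamZ lamM a1 a2 hlamZ.le ha1.le
    (hC _ (hH (t + 1))).le (hZdiag t) (hZdiag (t + 1)) ((hHstep t).2 _ (hH t)) (hAstep t)
    (hZstep t).2
  refine ⟨hdescent, fun t => (hdescent t).trans ?_⟩
  rw [sub_sub]
  exact sub_le_self _ (add_nonneg (mul_nonneg (half_pos hlam).le (sq_nonneg _))
    (mul_nonneg (half_pos hlam).le (sq_nonneg _)))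

theorem dgsl_sufficient_decrease (n k d : ℕ) (hn : 0 < n) (hk : 0 < k) (hd : 0 < d)
    (X : Matrix (Fin d) (Fin n) ℝ) (W M C : Matrix (Fin n) (Fin n) ℝ)
    (lam lamZ lamM a1 a2 : ℝ) (hlam : 0 < lam) (hlamZ : 0 < lamZ)
    (hlamM : 0 < lamM) (ha1 : 0 < a1) (ha2 : 0 < a2)
    (hC : ∀ H : Matrix (Fin k) (Fin n) ℝ, H * Hᵀ = 1 → 0 < trace (H * lap C * Hᵀ))
    (Aseq Zseq : ℕ → Matrix (Fin n) (Fin n) ℝ)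
    (Hseq : ℕ → Matrix (Fin k) (Fin n) ℝ)
    (hZ0 : ∀ i, Zseq 0 i i = 0) (hH0 : Hseq 0 * (Hseq 0)ᵀ = 1)
    (hHstep : ∀ t : ℕ, Hseq (t + 1) * (Hseq (t + 1))ᵀ = 1 ∧
      ∀ H : Matrix (Fin k) (Fin n) ℝ, H * Hᵀ = 1 →
        fObj X W M C lam lamZ lamM a1 a2 (Aseq t) (Zseq t) (Hseq (t + 1))
          ≤ fObj X W M C lam lamZ lamM a1 a2 (Aseq t) (Zseq t) H)
    (hAstep : ∀ (t : ℕ) (A : Matrix (Fin n) (Fin n) ℝ),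
      fObj X W M C lam lamZ lamM a1 a2 (Aseq (t + 1)) (Zseq t) (Hseq (t + 1))
        ≤ fObj X W M C lam lamZ lamM a1 a2 A (Zseq t) (Hseq (t + 1)))
    (hZstep : ∀ t : ℕ, (∀ i, Zseq (t + 1) i i = 0) ∧
      ∀ Z : Matrix (Fin n) (Fin n) ℝ, (∀ i, Z i i = 0) →
        fObj X W M C lam lamZ lamM a1 a2 (Aseq (t + 1)) (Zseq (t + 1)) (Hseq (t + 1))
          ≤ fObj X W M C lam lamZ lamM a1 a2 (Aseq (t + 1)) Z (Hseq (t + 1))) :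
    (∀ t : ℕ,
      fObj X W M C lam lamZ lamM a1 a2 (Aseq (t + 1)) (Zseq (t + 1)) (Hseq (t + 1))
        ≤ fObj X W M C lam lamZ lamM a1 a2 (Aseq t) (Zseq t) (Hseq t)
          - (lam / 2) * frob (Aseq (t + 1) - Aseq t) ^ 2
          - (lam / 2) * frob (Zseq (t + 1) - Zseq t) ^ 2) ∧
    ∀ t : ℕ,
      fObj X W M C lam lamZ lamM a1 a2 (Aseq (t + 1)) (Zseq (t + 1)) (Hseq (t + 1))
        ≤ fObj X W M C lam lamZ lamM a1 a2 (Aseq t) (Zseq t) (Hseq t) :=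
  dgsl_sufficient_decrease_general n k d X W M C lam lamZ lamM a1 a2 hlam hlamZ ha1 hC Aseq Zseq
    Hseq hZ0 hH0 hHstep hAstep hZstep
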